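/- arXiv:2311.04421 — 3 statements merged into one kernel-verified Lean document; each statement's English description precedes it below -/
import Mathlib

section
/- If an exact sequence Φ = {φ_k}_{k≥1} in a separable Hilbert space H has a reproducing partner (i.e., there exists Ψ with ⟨f,g⟩ = Σ_k ⟨f, ψ_k⟩⟨φ_k, g⟩ for all f, g), then every f ∈ H has a unique weak expansion f = Σ_k c_k φ_k; in other words, Φ is a weak Schauder basis for H. -/
open Filter Topology
open scoped InnerProductSpace

/-!
The coefficients `c_k = ⟪f, ψ_k⟫` of a reproducing partner give a weak expansion of every `f`.
For uniqueness, minimality of `φ` and the projection theorem provide, for each `m`, a vector `v`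
orthogonal to every `φ_k` with `k ≠ m` but not to `φ_m`. Testing a weak expansion against `v`
collapses the series to its `m`-th term, so `c_m = ⟪f, v⟫ / ⟪φ_m, v⟫` is forced.
-/

section

variable {𝕜 E : Type*} [RCLike 𝕜] [NormedAddCommGroup E] [InnerProductSpace 𝕜 E]

def IsWeakExpansion (φ : ℕ → E) (f : E) (c : ℕ → 𝕜) : Prop :=
  ∀ g : E, Tendsto (fun N => ∑ k ∈ Finset.range N, c k * ⟪φ k, g⟫_𝕜) atTop (𝓝 ⟪f, g⟫_𝕜)

theorem exists_orthogonal_inner_ne_zero_of_notMem_closure_span [CompleteSpace E] {s : Set E}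
    {x : E} (hx : x ∉ closure (Submodule.span 𝕜 s : Set E)) :
    ∃ v : E, (∀ y ∈ s, ⟪y, v⟫_𝕜 = 0) ∧ ⟪x, v⟫_𝕜 ≠ 0 := by
  set K := Submodule.span 𝕜 s
  have hxK : x ∉ Kᗮᗮ := by
    rwa [K.orthogonal_orthogonal_eq_closure, ← SetLike.mem_coe, K.topologicalClosure_coe]
  obtain ⟨v, hvK, hvx⟩ : ∃ v ∈ Kᗮ, ⟪v, x⟫_𝕜 ≠ 0 := by
    simpa only [Submodule.mem_orthogonal, not_forall, exists_prop] using hxK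
  refine ⟨v, fun y hy => (K.mem_orthogonal v).mp hvK y (Submodule.subset_span hy), ?_⟩
  rwa [← inner_conj_symm, map_ne_zero]

theorem IsWeakExpansion.coeff_mul_inner_eq {φ : ℕ → E} {f : E} {c : ℕ → 𝕜}
    (hc : IsWeakExpansion φ f c) {m : ℕ} {v : E} (hv : ∀ k ≠ m, ⟪φ k, v⟫_𝕜 = 0) :
    c m * ⟪φ m, v⟫_𝕜 = ⟪f, v⟫_𝕜 := by
  have hsingle : HasSum (fun k => c k * ⟪φ k, v⟫_𝕜) (c m * ⟪φ m, v⟫_𝕜) :=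
    hasSum_single m fun k hk => by rw [hv k hk, mul_zero]
  exact tendsto_nhds_unique hsingle.tendsto_sum_nat (hc v)

theorem IsWeakExpansion.unique [CompleteSpace E] {φ : ℕ → E}
    (hminimal : ∀ m : ℕ, φ m ∉ closure (Submodule.span 𝕜 (φ '' {n | n ≠ m}) : Set E))
    {f : E} {c d : ℕ → 𝕜} (hc : IsWeakExpansion φ f c) (hd : IsWeakExpansion φ f d) :
    c = d := by
  funext m
  obtain ⟨v, hv, hmv⟩ := exists_orthogonal_inner_ne_zero_of_notMem_closure_span (hminimal m)
  have hvk : ∀ k ≠ m, ⟪φ k, v⟫_𝕜 = 0 := fun k hk => hv _ ⟨k, hk, rfl⟩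
  exact mul_right_cancel₀ hmv
    ((hc.coeff_mul_inner_eq hvk).trans (hd.coeff_mul_inner_eq hvk).symm)

end

theorem exact_with_reproducing_partner_is_weak_schauder_basis_general
    {H : Type*} [NormedAddCommGroup H] [InnerProductSpace ℂ H]
    [CompleteSpace H]
    (φ : ℕ → H)
    (hminimal : ∀ m : ℕ, φ m ∉ closure (Submodule.span ℂ (φ '' {n | n ≠ m}) : Set H))
    (hrep : ∃ ψ : ℕ → H, ∀ f g : H,
      Tendsto (fun N => ∑ k ∈ Finset.range N, ⟪f, ψ k⟫_ℂ * ⟪φ k, g⟫_ℂ)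
        atTop (𝓝 ⟪f, g⟫_ℂ)) :
    ∀ f : H, ∃! c : ℕ → ℂ, ∀ g : H,
      Tendsto (fun N => ∑ k ∈ Finset.range N, c k * ⟪φ k, g⟫_ℂ)
        atTop (𝓝 ⟪f, g⟫_ℂ) := by
  obtain ⟨ψ, hψ⟩ := hrep
  intro f
  have hexp : IsWeakExpansion φ f fun k => ⟪f, ψ k⟫_ℂ := hψ f
  exact ⟨_, hexp, fun c hc => IsWeakExpansion.unique hminimal hc hexp⟩

/-- If an exact sequence `Φ` in a separable Hilbert space has a reproducing partner,
then every `f ∈ H` has a unique weak expansion `f = Σ c_k φ_k`; i.e. `Φ` is a weak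
Schauder basis for `H`. -/
theorem exact_with_reproducing_partner_is_weak_schauder_basis
    {H : Type*} [NormedAddCommGroup H] [InnerProductSpace ℂ H]
    [CompleteSpace H] [TopologicalSpace.SeparableSpace H]
    (φ : ℕ → H)
    (hcomplete : Dense (Submodule.span ℂ (Set.range φ) : Set H))
    (hminimal : ∀ m : ℕ, φ m ∉ closure (Submodule.span ℂ (φ '' {n | n ≠ m}) : Set H))
    (hrep : ∃ ψ : ℕ → H, ∀ f g : H,
      Tendsto (fun N => ∑ k ∈ Finset.range N, ⟪f, ψ k⟫_ℂ * ⟪φ k, g⟫_ℂ)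
        atTop (𝓝 ⟪f, g⟫_ℂ)) :
    ∀ f : H, ∃! c : ℕ → ℂ, ∀ g : H,
      Tendsto (fun N => ∑ k ∈ Finset.range N, c k * ⟪φ k, g⟫_ℂ)
        atTop (𝓝 ⟪f, g⟫_ℂ) :=
  exact_with_reproducing_partner_is_weak_schauder_basis_general φ hminimal hrep
end

section
/- Suppose Φ = {φ_k}_{k≥0} in a separable Hilbert space H is such that Φ' = {φ_k}_{k≥1} is exact with biorthogonal sequence {φ̃_k}, and Φ has a reproducing partner Ψ = {ψ_k}_{k≥0}. Then (Φ̃, Φ') is itself a reproducing pair: ⟨g, h⟩ = Σ_{k=1}^∞ ⟨g, φ̃_k⟩⟨φ_k, h⟩ for all g, h ∈ H. -/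
/-!
Testing the reproducing identity of `(Ψ, Φ)` against `φ̃_m` shows that only the terms `k = 0`
and `k = m + 1` survive, so `φ̃_m = ⟨φ_0, φ̃_m⟩ ψ_0 + ψ_{m+1}`. Hence the partial sums of
`(Φ̃, Φ')` are those of `(Ψ, Φ)` with the `k = 0` term `⟨g, ψ_0⟩⟨φ_0, h⟩` replaced by
`⟨g, ψ_0⟩ A_N h`, where `A_N h = Σ_{k<N} ⟨φ_0, φ̃_k⟩⟨φ_{k+1}, h⟩`. For `g = φ_{j+1}` the
partial sums of `(Φ̃, Φ')` are eventually `⟨φ_{j+1}, h⟩` by biorthogonality, and completeness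
of `Φ'` provides a `j` with `⟨φ_{j+1}, ψ_0⟩ ≠ 0` unless `ψ_0 = 0`; so `A_N h → ⟨φ_0, h⟩`.
-/

open Filter Topology Finset
open scoped InnerProductSpace

theorem Filter.Tendsto.tendsto_add_iff {α M : Type*} [AddCommGroup M] [TopologicalSpace M]
    [IsTopologicalAddGroup M] {l : Filter α} {u v : α → M} {a b : M}
    (hu : Tendsto u l (𝓝 a)) :
    Tendsto (fun n => u n + v n) l (𝓝 (a + b)) ↔ Tendsto v l (𝓝 b) :=
  ⟨fun h => by simpa using h.sub hu, hu.add⟩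

theorem tendsto_sum_range_add_one {M : Type*} [AddCommGroup M] [TopologicalSpace M]
    [IsTopologicalAddGroup M] {u : ℕ → M} {a : M}
    (h : Tendsto (fun N => ∑ k ∈ range N, u k) atTop (𝓝 a)) :
    Tendsto (fun N => ∑ k ∈ range N, u (k + 1)) atTop (𝓝 (a - u 0)) :=
  ((h.comp (tendsto_add_atTop_nat 1)).sub_const (u 0)).congr fun N => by
    simp [sum_range_succ']

section InnerProductSpace

variable {𝕜 E : Type*} [RCLike 𝕜] [NormedAddCommGroup E] [InnerProductSpace 𝕜 E]

theorem exists_inner_ne_zero_of_dense_span {ι : Type*} {v : ι → E} {x : E}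
    (hv : Dense (Submodule.span 𝕜 (Set.range v) : Set E)) (hx : x ≠ 0) :
    ∃ k, ⟪v k, x⟫_𝕜 ≠ 0 := by
  by_contra! h
  refine hx (hv.eq_zero_of_inner_right 𝕜 fun u hu => ?_)
  have hspan : Submodule.span 𝕜 (Set.range v) ≤ (𝕜 ∙ x)ᗮ :=
    Submodule.span_le.2 <| Set.range_subset_iff.2 fun k =>
      Submodule.mem_orthogonal_singleton_iff_inner_left.2 (h k)
  exact Submodule.mem_orthogonal_singleton_iff_inner_left.1 (hspan hu)

theorem eq_sum_smul_of_tendsto_sum_inner_mul {ψ : ℕ → E} {c : ℕ → 𝕜} {x : E} {s : Finset ℕ}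
    (hx : ∀ f, Tendsto (fun N => ∑ k ∈ range N, ⟪f, ψ k⟫_𝕜 * c k) atTop (𝓝 ⟪f, x⟫_𝕜))
    (hc : ∀ k ∉ s, c k = 0) :
    x = ∑ k ∈ s, c k • ψ k := by
  refine ext_inner_left 𝕜 fun f => tendsto_nhds_unique (hx f) ?_
  simp only [inner_sum, inner_smul_right, mul_comm (c _)]
  exact (hasSum_sum_of_ne_finset_zero fun k hk => by simp [hc k hk]).tendsto_sum_nat

section Biorthogonal

variable {φ ψ φt : ℕ → E}

theorem biorthogonal_eq_smul_add
    (hbi : ∀ j k : ℕ, ⟪φ (j + 1), φt k⟫_𝕜 = if j = k then 1 else 0)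
    (hrep : ∀ f g : E,
      Tendsto (fun N => ∑ k ∈ range N, ⟪f, ψ k⟫_𝕜 * ⟪φ k, g⟫_𝕜) atTop (𝓝 ⟪f, g⟫_𝕜))
    (m : ℕ) :
    φt m = ⟪φ 0, φt m⟫_𝕜 • ψ 0 + ψ (m + 1) := by
  have hsupp : ∀ k ∉ ({0, m + 1} : Finset ℕ), ⟪φ k, φt m⟫_𝕜 = 0 := by
    rintro (_ | j) hj
    · simp at hj
    · rw [hbi, if_neg (by simpa using hj)]
  have hφt := eq_sum_smul_of_tendsto_sum_inner_mul (hrep · (φt m)) hsupp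
  rwa [sum_pair (Nat.succ_ne_zero m).symm, hbi, if_pos rfl, one_smul] at hφt

theorem tendsto_sum_biorthogonal_basis
    (hbi : ∀ j k : ℕ, ⟪φ (j + 1), φt k⟫_𝕜 = if j = k then 1 else 0) (j : ℕ) (h : E) :
    Tendsto (fun N => ∑ k ∈ range N, ⟪φ (j + 1), φt k⟫_𝕜 * ⟪φ (k + 1), h⟫_𝕜)
      atTop (𝓝 ⟪φ (j + 1), h⟫_𝕜) := by
  have hsum := hasSum_single (f := fun k => ⟪φ (j + 1), φt k⟫_𝕜 * ⟪φ (k + 1), h⟫_𝕜) j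
    fun k hk => by rw [hbi, if_neg hk.symm, zero_mul]
  rw [hbi, if_pos rfl, one_mul] at hsum
  exact hsum.tendsto_sum_nat

theorem tendsto_sum_biorthogonal_iff
    (hbi : ∀ j k : ℕ, ⟪φ (j + 1), φt k⟫_𝕜 = if j = k then 1 else 0)
    (hrep : ∀ f g : E,
      Tendsto (fun N => ∑ k ∈ range N, ⟪f, ψ k⟫_𝕜 * ⟪φ k, g⟫_𝕜) atTop (𝓝 ⟪f, g⟫_𝕜))
    (g h : E) :
    Tendsto (fun N => ∑ k ∈ range N, ⟪g, φt k⟫_𝕜 * ⟪φ (k + 1), h⟫_𝕜) atTop (𝓝 ⟪g, h⟫_𝕜) ↔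
      Tendsto (fun N => ⟪g, ψ 0⟫_𝕜 * ∑ k ∈ range N, ⟪φ 0, φt k⟫_𝕜 * ⟪φ (k + 1), h⟫_𝕜)
        atTop (𝓝 (⟪g, ψ 0⟫_𝕜 * ⟪φ 0, h⟫_𝕜)) := by
  have hsplit : ∀ N, ∑ k ∈ range N, ⟪g, φt k⟫_𝕜 * ⟪φ (k + 1), h⟫_𝕜 =
      ∑ k ∈ range N, ⟪g, ψ (k + 1)⟫_𝕜 * ⟪φ (k + 1), h⟫_𝕜 +
        ⟪g, ψ 0⟫_𝕜 * ∑ k ∈ range N, ⟪φ 0, φt k⟫_𝕜 * ⟪φ (k + 1), h⟫_𝕜 := fun N => by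
    simp only [mul_sum, ← sum_add_distrib]
    refine sum_congr rfl fun k _ => ?_
    conv_lhs => rw [biorthogonal_eq_smul_add hbi hrep k, inner_add_right, inner_smul_right]
    ring
  simp only [hsplit]
  convert (tendsto_sum_range_add_one (hrep g h)).tendsto_add_iff using 3
  rw [sub_add_cancel]

end Biorthogonal

end InnerProductSpace

theorem biorthogonal_is_reproducing_partner_general
    {H : Type*} [NormedAddCommGroup H] [InnerProductSpace ℂ H]
    (φ ψ φt : ℕ → H)
    (hcomplete : Dense (Submodule.span ℂ (Set.range fun k => φ (k + 1)) : Set H))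
    (hbi : ∀ j k : ℕ, ⟪φ (j + 1), φt k⟫_ℂ = if j = k then 1 else 0)
    (hrep : ∀ f g : H,
      Tendsto (fun N => ∑ k ∈ Finset.range N, ⟪f, ψ k⟫_ℂ * ⟪φ k, g⟫_ℂ)
        atTop (𝓝 ⟪f, g⟫_ℂ)) :
    ∀ g h : H,
      Tendsto (fun N => ∑ k ∈ Finset.range N, ⟪g, φt k⟫_ℂ * ⟪φ (k + 1), h⟫_ℂ)
        atTop (𝓝 ⟪g, h⟫_ℂ) := by
  intro g h
  rw [tendsto_sum_biorthogonal_iff hbi hrep]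
  by_cases hψ₀ : ψ 0 = 0
  · simp only [hψ₀, inner_zero_right, zero_mul]
    exact tendsto_const_nhds
  obtain ⟨j, hj⟩ := exists_inner_ne_zero_of_dense_span hcomplete hψ₀
  have hA := (tendsto_sum_biorthogonal_iff hbi hrep _ h).1 (tendsto_sum_biorthogonal_basis hbi j h)
  simp only [← smul_eq_mul, tendsto_const_smul_iff₀ hj] at hA
  exact hA.const_mul _

/-- If `Φ' = {φ_k}_{k≥1}` is exact with biorthogonal sequence `{φ̃_k}`, and
`Φ = {φ_k}_{k≥0}` has a reproducing partner `Ψ`, then `(Φ̃, Φ')` is itself a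
reproducing pair: `⟨g, h⟩ = Σ_{k≥1} ⟨g, φ̃_k⟩⟨φ_k, h⟩` for all `g, h ∈ H`.
Here `φt k` denotes `φ̃_{k+1}`. -/
theorem biorthogonal_is_reproducing_partner
    {H : Type*} [NormedAddCommGroup H] [InnerProductSpace ℂ H]
    [CompleteSpace H] [TopologicalSpace.SeparableSpace H]
    (φ ψ φt : ℕ → H)
    (hcomplete : Dense (Submodule.span ℂ (Set.range fun k => φ (k + 1)) : Set H))
    (hminimal : ∀ m : ℕ, φ (m + 1) ∉
      closure (Submodule.span ℂ ((fun k => φ (k + 1)) '' {n | n ≠ m}) : Set H))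
    (hbi : ∀ j k : ℕ, ⟪φ (j + 1), φt k⟫_ℂ = if j = k then 1 else 0)
    (hrep : ∀ f g : H,
      Tendsto (fun N => ∑ k ∈ Finset.range N, ⟪f, ψ k⟫_ℂ * ⟪φ k, g⟫_ℂ)
        atTop (𝓝 ⟪f, g⟫_ℂ)) :
    ∀ g h : H,
      Tendsto (fun N => ∑ k ∈ Finset.range N, ⟪g, φt k⟫_ℂ * ⟪φ (k + 1), h⟫_ℂ)
        atTop (𝓝 ⟪g, h⟫_ℂ) :=
  biorthogonal_is_reproducing_partner_general φ ψ φt hcomplete hbi hrep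
end

section
/- Suppose Φ = {φ_k}_{k≥0} in a separable Hilbert space H is such that Φ' = {φ_k}_{k≥n} is exact (complete and minimal) for some n ≥ 1, and Φ has a reproducing partner Ψ = {ψ_k}_{k≥0}, i.e., ⟨f,g⟩ = Σ_{k≥0} ⟨f, ψ_k⟩⟨φ_k, g⟩ for all f, g ∈ H. Then Φ' is a weak Schauder basis for H: every f ∈ H has a unique weak expansion f = Σ_{k≥n} c_k φ_k. -/
/-!
Uniqueness: minimality of `{φ (k + n)}` gives, for each `m`, a vector `w` with
`⟪φ (j + n), w⟫ = δ_{jm}`, and testing a weak expansion against `w` recovers its `m`-th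
coefficient as `⟪f, w⟫`.

Existence: the vectors with a weak expansion in `{φ (k + n)}` form a subspace `V`, dense
because it contains the span of the `φ (k + n)`. Dropping the first `n` terms of the
reproducing formula expands every `u ⊥ ψ 0, …, ψ (n - 1)` in `{φ (k + n)}`, so `V` contains
the orthogonal complement of a finite-dimensional subspace. Such a `V` is closed, hence `V = H`.
-/

open Filter Topology
open scoped InnerProductSpace ComplexConjugate

section WeakExpansion

variable {𝕜 E : Type*} [RCLike 𝕜] [NormedAddCommGroup E] [InnerProductSpace 𝕜 E]

theorem exists_inner_eq_one_of_notMem_closure_span [CompleteSpace E] {S : Set E} {v : E}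
    (hv : v ∉ closure (Submodule.span 𝕜 S : Set E)) :
    ∃ w : E, ⟪v, w⟫_𝕜 = 1 ∧ ∀ s ∈ S, ⟪s, w⟫_𝕜 = 0 := by
  rw [← Submodule.topologicalClosure_coe, ← Submodule.orthogonal_orthogonal_eq_closure,
    SetLike.mem_coe, Submodule.mem_orthogonal'] at hv
  push Not at hv
  obtain ⟨w, hw, hvw⟩ := hv
  refine ⟨(⟪v, w⟫_𝕜)⁻¹ • w, by rw [inner_smul_right, inv_mul_cancel₀ hvw], fun s hs => ?_⟩
  rw [inner_smul_right, (Submodule.mem_orthogonal _ _).mp hw s (Submodule.subset_span hs),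
    mul_zero]

/-- `f = ∑ₖ conj (c k) • x k` weakly (the inner product is conjugate-linear on the left), with
partial sums taken in the natural ordering of `ℕ`. -/
def HasWeakExpansion (x : ℕ → E) (f : E) (c : ℕ → 𝕜) : Prop :=
  ∀ g : E, Tendsto (fun N => ∑ k ∈ Finset.range N, c k * ⟪x k, g⟫_𝕜) atTop (𝓝 ⟪f, g⟫_𝕜)

namespace HasWeakExpansion

variable {x : ℕ → E} {f f' : E} {c c' : ℕ → 𝕜}

theorem zero (x : ℕ → E) : HasWeakExpansion x 0 (0 : ℕ → 𝕜) := fun _ => by simp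

theorem add (h : HasWeakExpansion x f c) (h' : HasWeakExpansion x f' c') :
    HasWeakExpansion x (f + f') (c + c') := fun g => by
  simpa only [inner_add_left, Pi.add_apply, add_mul, Finset.sum_add_distrib] using
    (h g).add (h' g)

theorem smul (h : HasWeakExpansion x f c) (a : 𝕜) :
    HasWeakExpansion x (a • f) (fun k => conj a * c k) := fun g => by
  simpa only [inner_smul_left, mul_assoc, ← Finset.mul_sum] using (h g).const_mul (conj a)

theorem single (x : ℕ → E) (m : ℕ) : HasWeakExpansion x (x m) (Pi.single m (1 : 𝕜)) :=
  fun g => tendsto_const_nhds.congr' <| by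
    filter_upwards [eventually_gt_atTop m] with N hN
    rw [Finset.sum_eq_single_of_mem m (Finset.mem_range.mpr hN) fun k _ hk => by simp [hk]]
    simp

theorem shift (h : HasWeakExpansion x f c) (n : ℕ) :
    HasWeakExpansion (fun k => x (k + n)) (f - ∑ k ∈ Finset.range n, conj (c k) • x k)
      (fun k => c (k + n)) := fun g => by
  have := ((h g).comp (tendsto_add_atTop_nat n)).sub_const
    (∑ k ∈ Finset.range n, c k * ⟪x k, g⟫_𝕜)
  simpa only [Function.comp_def, add_comm _ n, Finset.sum_range_add, add_sub_cancel_left,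
    inner_sub_left, sum_inner, inner_smul_left, RCLike.conj_conj] using this

theorem coeff_eq_inner (h : HasWeakExpansion x f c) {m : ℕ} {w : E}
    (hm : ⟪x m, w⟫_𝕜 = 1) (hj : ∀ j ≠ m, ⟪x j, w⟫_𝕜 = 0) : c m = ⟪f, w⟫_𝕜 := by
  refine tendsto_nhds_unique (tendsto_const_nhds.congr' ?_) (h w)
  filter_upwards [eventually_gt_atTop m] with N hN
  rw [Finset.sum_eq_single_of_mem m (Finset.mem_range.mpr hN) fun k _ hk => by simp [hj k hk],
    hm, mul_one]

theorem unique_of_minimal [CompleteSpace E]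
    (hmin : ∀ m, x m ∉ closure (Submodule.span 𝕜 (x '' {j | j ≠ m}) : Set E)) (h : HasWeakExpansion x f c) (h' : HasWeakExpansion x f c') :
    c = c' := funext fun m => by
  obtain ⟨w, hm, hj⟩ := exists_inner_eq_one_of_notMem_closure_span (hmin m)
  have hj' : ∀ j ≠ m, ⟪x j, w⟫_𝕜 = 0 := fun j hjm => hj _ ⟨j, hjm, rfl⟩
  rw [h.coeff_eq_inner hm hj', h'.coeff_eq_inner hm hj']

end HasWeakExpansion

def weakExpansionSubmodule (x : ℕ → E) : Submodule 𝕜 E where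
  carrier := {f | ∃ c, HasWeakExpansion x f c}
  zero_mem' := ⟨0, .zero x⟩
  add_mem' := fun ⟨_, h⟩ ⟨_, h'⟩ => ⟨_, h.add h'⟩
  smul_mem' a _ := fun ⟨_, h⟩ => ⟨_, h.smul a⟩

theorem span_range_le_weakExpansionSubmodule (x : ℕ → E) :
    Submodule.span 𝕜 (Set.range x) ≤ weakExpansionSubmodule x :=
  Submodule.span_le.mpr <| Set.range_subset_iff.mpr fun m => ⟨_, .single x m⟩

theorem Submodule.eq_top_of_dense_of_orthogonal_le {U V : Submodule 𝕜 E} [FiniteDimensional 𝕜 U]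
    (hV : Dense (V : Set E)) (hUV : Uᗮ ≤ V) : V = ⊤ := by
  have : FiniteDimensional 𝕜 (E ⧸ Uᗮ) :=
    (Submodule.quotientEquivOfIsCompl Uᗮ U U.isCompl_orthogonal.symm).symm.finiteDimensional
  have hclosed := Submodule.isClosed_mono_of_finiteDimensional_quotient
    (Submodule.isClosed_orthogonal U) hUV
  rw [← SetLike.coe_set_eq, Submodule.top_coe, ← hclosed.closure_eq, hV.closure_eq]

theorem orthogonal_span_le_weakExpansionSubmodule_shift {x ψ : ℕ → E}
    (hrep : ∀ u, HasWeakExpansion x u fun k => ⟪u, ψ k⟫_𝕜) (n : ℕ) :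
    (Submodule.span 𝕜 (ψ '' Set.Iio n))ᗮ ≤ weakExpansionSubmodule fun k => x (k + n) :=
  fun u hu => by
    have hψu : ∀ k ∈ Finset.range n, ⟪u, ψ k⟫_𝕜 = 0 := fun k hk =>
      Submodule.inner_left_of_mem_orthogonal
        (Submodule.subset_span (s := ψ '' Set.Iio n) ⟨k, Finset.mem_range.mp hk, rfl⟩) hu
    have hu' := (hrep u).shift n
    rw [Finset.sum_eq_zero fun k hk => by rw [hψu k hk, map_zero, zero_smul], sub_zero] at hu'
    exact ⟨_, hu'⟩

end WeakExpansion

theorem overcomplete_by_n_weak_schauder_basis_general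
    {H : Type*} [NormedAddCommGroup H] [InnerProductSpace ℂ H]
    [CompleteSpace H]
    (n : ℕ) (φ ψ : ℕ → H)
    (hcomplete : Dense (Submodule.span ℂ (Set.range fun k => φ (k + n)) : Set H))
    (hminimal : ∀ m : ℕ, φ (m + n) ∉
      closure (Submodule.span ℂ ((fun k => φ (k + n)) '' {j | j ≠ m}) : Set H))
    (hrep : ∀ f g : H,
      Tendsto (fun N => ∑ k ∈ Finset.range N, ⟪f, ψ k⟫_ℂ * ⟪φ k, g⟫_ℂ)
        atTop (𝓝 ⟪f, g⟫_ℂ)) :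
    ∀ f : H, ∃! c : ℕ → ℂ, ∀ g : H,
      Tendsto (fun N => ∑ k ∈ Finset.range N, c k * ⟪φ (k + n), g⟫_ℂ)
        atTop (𝓝 ⟪f, g⟫_ℂ) := by
  have : FiniteDimensional ℂ (Submodule.span ℂ (ψ '' Set.Iio n)) :=
    .span_of_finite ℂ ((Set.finite_Iio n).image ψ)
  have htop : weakExpansionSubmodule (fun k => φ (k + n)) = ⊤ :=
    Submodule.eq_top_of_dense_of_orthogonal_le
      (hcomplete.mono (span_range_le_weakExpansionSubmodule _))
      (orthogonal_span_le_weakExpansionSubmodule_shift hrep n)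
  intro f
  obtain ⟨c, hc⟩ : f ∈ weakExpansionSubmodule fun k => φ (k + n) := htop ▸ Submodule.mem_top
  exact ⟨c, hc, fun c' hc' => HasWeakExpansion.unique_of_minimal hminimal hc' hc⟩

/-- If `Φ' = {φ_k}_{k≥n}` is exact (complete and minimal) for some `n ≥ 1` and
`Φ = {φ_k}_{k≥0}` has a reproducing partner `Ψ`, then `Φ'` is a weak Schauder basis
for `H`: every `f ∈ H` has a unique weak expansion `f = Σ_{k≥n} c_k φ_k`. -/
theorem overcomplete_by_n_weak_schauder_basis
    {H : Type*} [NormedAddCommGroup H] [InnerProductSpace ℂ H]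
    [CompleteSpace H] [TopologicalSpace.SeparableSpace H]
    (n : ℕ) (hn : 1 ≤ n) (φ ψ : ℕ → H)
    (hcomplete : Dense (Submodule.span ℂ (Set.range fun k => φ (k + n)) : Set H))
    (hminimal : ∀ m : ℕ, φ (m + n) ∉
      closure (Submodule.span ℂ ((fun k => φ (k + n)) '' {j | j ≠ m}) : Set H))
    (hrep : ∀ f g : H,
      Tendsto (fun N => ∑ k ∈ Finset.range N, ⟪f, ψ k⟫_ℂ * ⟪φ k, g⟫_ℂ)
        atTop (𝓝 ⟪f, g⟫_ℂ)) :
    ∀ f : H, ∃! c : ℕ → ℂ, ∀ g : H,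
      Tendsto (fun N => ∑ k ∈ Finset.range N, c k * ⟪φ (k + n), g⟫_ℂ)
        atTop (𝓝 ⟪f, g⟫_ℂ) :=
  overcomplete_by_n_weak_schauder_basis_general n φ ψ hcomplete hminimal hrep
end
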